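/- Let d ≥ 2 and let G ≤ Aut(T_d) be a weakly branch group acting on the boundary X = ∂T_d with the uniform Bernoulli measure μ. Then for every clopen subset A ⊆ X (in the product topology) and every ε > 0 there exists g ∈ G such that supp(g) ⊆ A and μ(A \ supp(g)) < ε. Consequently, the action of G on (X, μ) is absolutely non-free: for every measurable set B and every ε > 0 there exists g ∈ G with μ(Fix(g) Δ B) < ε. -/

import Mathlib

open MeasureTheory
open scoped symmDiff ENNReal Pointwise

/-- Vertices of the `d`-regular rooted tree: finite words over the alphabet `Fin d`. -/
abbrev Word (d : ℕ) := List (Fin d)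

/-- A permutation of the vertex set is a tree automorphism if it preserves word length and the
prefix relation. -/
def IsTreeAut {d : ℕ} (g : Equiv.Perm (Word d)) : Prop :=
  (∀ v : Word d, (g v).length = v.length) ∧
  ∀ v w : Word d, v <+: w ↔ g v <+: g w

/-- The boundary of the `d`-regular rooted tree: infinite sequences over `Fin d`. -/
abbrev Boundary (d : ℕ) := ℕ → Fin d

/-- The length-`n` prefix of a boundary point, as a word. -/
def prefixWord {d : ℕ} (x : Boundary d) (n : ℕ) : Word d := List.ofFn fun i : Fin n => x i

/-- `act` realizes the boundary action of the tree automorphisms in `G`: for `g ∈ G`, the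
length-`n` prefix of `act g x` is `g` applied to the length-`n` prefix of `x`, for every `n`. -/
def IsBoundaryAction {d : ℕ} (G : Subgroup (Equiv.Perm (Word d)))
    (act : Equiv.Perm (Word d) → Boundary d → Boundary d) : Prop :=
  ∀ g ∈ G, ∀ (x : Boundary d) (n : ℕ), prefixWord (act g x) n = g (prefixWord x n)

/-- The cylinder of all boundary points having the word `v` as a prefix. -/
def cylinder {d : ℕ} (v : Word d) : Set (Boundary d) :=
  {x : Boundary d | prefixWord x v.length = v}

/-- The uniform Bernoulli measure: every cylinder on a word of length `n` has measure `d⁻ⁿ`. -/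
def IsUniformBernoulli {d : ℕ} (μ : Measure (Boundary d)) : Prop :=
  ∀ v : Word d, μ (cylinder v) = ((d : ℝ≥0∞)⁻¹) ^ v.length

/-- `G` acts transitively on the words of each fixed length. -/
def LevelTransitive {d : ℕ} (G : Subgroup (Equiv.Perm (Word d))) : Prop :=
  ∀ v w : Word d, v.length = w.length → ∃ g ∈ G, g v = w

/-- The rigid stabilizer of the word `v`: elements of `G` fixing every word that does not have
`v` as a prefix. -/
def ristSet {d : ℕ} (G : Subgroup (Equiv.Perm (Word d))) (v : Word d) :
    Set (Equiv.Perm (Word d)) :=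
  {g : Equiv.Perm (Word d) | g ∈ G ∧ ∀ w : Word d, ¬ v <+: w → g w = w}

/-- `G` is weakly branch: level transitive with all rigid stabilizers nontrivial. -/
def IsWeaklyBranch {d : ℕ} (G : Subgroup (Equiv.Perm (Word d))) : Prop :=
  LevelTransitive G ∧ ∀ v : Word d, ∃ g ∈ ristSet G v, g ≠ 1

/-- The rigid stabilizer of level `k`: the subgroup generated by the rigid stabilizers of all
words of length `k`. -/
def ristLevel {d : ℕ} (G : Subgroup (Equiv.Perm (Word d))) (k : ℕ) :
    Subgroup (Equiv.Perm (Word d)) :=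
  Subgroup.closure (⋃ v ∈ {v : Word d | v.length = k}, ristSet G v)

/-- `G` is branch: level transitive with all level rigid stabilizers of finite index in `G`. -/
def IsBranch {d : ℕ} (G : Subgroup (Equiv.Perm (Word d))) : Prop :=
  LevelTransitive G ∧ ∀ k : ℕ, (ristLevel G k).relIndex G ≠ 0

/-- The fixed-point set of `g` on the boundary, relative to the boundary action `act`. -/
def fixedSet {d : ℕ} (act : Equiv.Perm (Word d) → Boundary d → Boundary d)
    (g : Equiv.Perm (Word d)) : Set (Boundary d) :=
  {x : Boundary d | act g x = x}

/-- The support of `g` on the boundary: points moved by `g`. -/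
def suppSet {d : ℕ} (act : Equiv.Perm (Word d) → Boundary d → Boundary d)
    (g : Equiv.Perm (Word d)) : Set (Boundary d) :=
  {x : Boundary d | act g x ≠ x}

/-!
Conjugating a nontrivial element of `rist u` by level transitivity moves every vertex below `u`
on a suitable level, so by double counting some `h ∈ rist u` fixes at most half of the cylinder
of `u` on that level. Suppose every `rist w` has an element fixing at most a fraction `c` of the
cylinder of `w`. Go deep enough that `h` fixes most points below the vertices it fixes, put such
an element below each of these vertices and multiply by `h`: the result lies in `rist u` and
fixes at most a fraction about `c / 2` of the cylinder of `u`. Iterating, the fraction tends to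
`0`. A clopen set is a finite union of cylinders of one level, and filling each of them gives the
first claim; the second follows because clopen sets are dense among measurable sets.
-/

theorem List.IsPrefix.eq_of_length_eq_of_prefix {α : Type*} {v w q : List α} (hv : v <+: q)
    (hw : w <+: q) (h : v.length = w.length) : v = w :=
  (List.prefix_of_prefix_length_le hv hw h.le).eq_of_length h

section Words

open Finset

variable {d : ℕ}

@[simp]
theorem prefixWord_length (x : Boundary d) (n : ℕ) : (prefixWord x n).length = n := by
  simp [prefixWord]

theorem prefixWord_eq_take (x : Boundary d) {m n : ℕ} (h : m ≤ n) :
    prefixWord x m = (prefixWord x n).take m :=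
  List.ext_getElem (by simp [h]) fun _ _ _ => by simp [prefixWord]

theorem prefixWord_prefix_prefixWord (x : Boundary d) {m n : ℕ} (h : m ≤ n) :
    prefixWord x m <+: prefixWord x n := by
  rw [prefixWord_eq_take x h]
  exact List.take_prefix _ _

theorem eq_of_forall_prefixWord_eq {x y : Boundary d}
    (h : ∀ n, prefixWord x n = prefixWord y n) : x = y := by
  funext i
  have := h (i + 1)
  rw [prefixWord, prefixWord, List.ofFn_inj] at this
  exact congrFun this (Fin.last i)

theorem mem_cylinder_iff_prefixWord_eq {x : Boundary d} {w : Word d} :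
    x ∈ cylinder w ↔ prefixWord x w.length = w := Iff.rfl

theorem prefix_prefixWord_iff {x : Boundary d} {w : Word d} {n : ℕ} (h : w.length ≤ n) :
    w <+: prefixWord x n ↔ x ∈ cylinder w := by
  rw [mem_cylinder_iff_prefixWord_eq, prefixWord_eq_take x h, List.prefix_iff_eq_take,
    eq_comm]

theorem not_prefix_prefixWord {x : Boundary d} {w : Word d} {n : ℕ} (h : n < w.length) :
    ¬ w <+: prefixWord x n := fun hw =>
  (hw.length_le.trans_lt (by simpa using h)).false

noncomputable def levelWords (d n : ℕ) : Finset (Word d) :=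
  univ.image (List.ofFn : (Fin n → Fin d) → Word d)

@[simp]
theorem mem_levelWords {n : ℕ} {w : Word d} : w ∈ levelWords d n ↔ w.length = n := by
  refine ⟨?_, fun h => mem_image.mpr ⟨fun i => w[i], mem_univ _, ?_⟩⟩
  · intro hw
    obtain ⟨f, -, rfl⟩ := mem_image.mp hw
    simp
  · subst h
    exact List.ofFn_getElem

noncomputable def extensions (u : Word d) (n : ℕ) : Finset (Word d) :=
  (levelWords d n).filter (u <+: ·)

@[simp]
theorem mem_extensions {u w : Word d} {n : ℕ} :
    w ∈ extensions u n ↔ w.length = n ∧ u <+: w := by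
  simp [extensions]

theorem setOf_prefixWord_mem_extensions {u : Word d} {n : ℕ} (h : u.length ≤ n) :
    {x : Boundary d | prefixWord x n ∈ extensions u n} = cylinder u := by
  ext x
  simp [prefix_prefixWord_iff h]

end Words

section Measure

open Finset

variable {d : ℕ}

theorem measurableSet_setOf_prefixWord (n : ℕ) (p : Word d → Prop) :
    MeasurableSet {x : Boundary d | p (prefixWord x n)} :=
  (MeasurableSet.of_discrete (s := {f : Fin n → Fin d | p (List.ofFn f)})).preimage
    (measurable_pi_lambda _ fun i => measurable_pi_apply (i : ℕ))

theorem isOpen_setOf_prefixWord (n : ℕ) (p : Word d → Prop) :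
    IsOpen {x : Boundary d | p (prefixWord x n)} :=
  (isOpen_discrete {f : Fin n → Fin d | p (List.ofFn f)}).preimage
    (f := fun x : Boundary d => fun i : Fin n => x i) (continuous_pi fun _ => continuous_apply _)

theorem measurableSet_cylinder (w : Word d) : MeasurableSet (cylinder w) :=
  measurableSet_setOf_prefixWord w.length (· = w)

theorem measure_setOf_prefixWord_mem_eq_sum (μ : Measure (Boundary d)) {n : ℕ}
    {S : Finset (Word d)} (hS : ∀ w ∈ S, w.length = n) :
    μ {x | prefixWord x n ∈ S} = ∑ w ∈ S, μ (cylinder w) := by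
  have hunion : {x | prefixWord x n ∈ S} = ⋃ w ∈ S, cylinder w := by
    ext x
    simp only [Set.mem_ofPred_eq, Set.mem_iUnion, mem_cylinder_iff_prefixWord_eq, exists_prop]
    exact ⟨fun hx => ⟨_, hx, by rw [hS _ hx]⟩,
      fun ⟨w, hw, hx⟩ => by rwa [← hS w hw, hx]⟩
  have hdisj : (S : Set (Word d)).PairwiseDisjoint cylinder := fun v hv w hw hvw =>
    Set.disjoint_left.mpr fun x hxv hxw => hvw <| by
      rw [mem_cylinder_iff_prefixWord_eq, hS v hv] at hxv
      rw [mem_cylinder_iff_prefixWord_eq, hS w hw] at hxw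
      rw [← hxv, hxw]
  rw [hunion, measure_biUnion_finset hdisj fun w _ => measurableSet_cylinder w]

theorem measure_setOf_prefixWord_mem {μ : Measure (Boundary d)} (hμ : IsUniformBernoulli μ)
    {n : ℕ} {S : Finset (Word d)} (hS : ∀ w ∈ S, w.length = n) :
    μ {x | prefixWord x n ∈ S} = #S * (d : ℝ≥0∞)⁻¹ ^ n := by
  rw [measure_setOf_prefixWord_mem_eq_sum μ hS, sum_congr rfl fun w hw => by rw [hμ w, hS w hw],
    sum_const, nsmul_eq_mul]

end Measure

section Clopen

open Finset Topology

variable {d : ℕ}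

theorem mem_cylinder_prefixWord_iff {x y : Boundary d} {n : ℕ} :
    y ∈ cylinder (prefixWord x n) ↔ ∀ i < n, y i = x i := by
  rw [mem_cylinder_iff_prefixWord_eq, prefixWord_length, prefixWord, prefixWord, List.ofFn_inj,
    funext_iff, Fin.forall_iff]

theorem mem_cylinder_prefixWord (x : Boundary d) (n : ℕ) : x ∈ cylinder (prefixWord x n) :=
  mem_cylinder_prefixWord_iff.mpr fun _ _ => rfl

theorem cylinder_prefixWord_anti (x : Boundary d) : Antitone (cylinder ∘ prefixWord x) :=
  fun _ _ hmn _ hy => mem_cylinder_prefixWord_iff.mpr fun i hi =>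
    mem_cylinder_prefixWord_iff.mp hy i (hi.trans_le hmn)

theorem IsOpen.exists_cylinder_prefixWord_subset {U : Set (Boundary d)} (hU : IsOpen U)
    {x : Boundary d} (hx : x ∈ U) : ∃ n, cylinder (prefixWord x n) ⊆ U := by
  have hUx : U ∈ 𝓝 x := hU.mem_nhds hx
  rw [nhds_pi, Filter.mem_pi] at hUx
  obtain ⟨I, hI, t, ht, hsub⟩ := hUx
  obtain ⟨N, hN⟩ := hI.bddAbove
  refine ⟨N + 1, fun y hy => hsub fun i hi => ?_⟩
  rw [mem_cylinder_prefixWord_iff.mp hy i (Nat.lt_succ_of_le (hN hi))]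
  exact mem_of_mem_nhds (ht i)

theorem IsClopen.exists_eq_setOf_prefixWord_mem {A : Set (Boundary d)} (hA : IsClopen A) :
    ∃ N, ∃ S : Finset (Word d),
      (∀ w ∈ S, w.length = N) ∧ A = {x | prefixWord x N ∈ S} := by
  classical
  let U : ℕ → Set (Boundary d) := fun n =>
    {x | cylinder (prefixWord x n) ⊆ A ∨ cylinder (prefixWord x n) ⊆ Aᶜ}
  have hcover : ⋃ n, U n = Set.univ := Set.eq_univ_of_forall fun x => by
    by_cases hx : x ∈ A
    · obtain ⟨n, hn⟩ := hA.isOpen.exists_cylinder_prefixWord_subset hx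
      exact Set.mem_iUnion.mpr ⟨n, .inl hn⟩
    · obtain ⟨n, hn⟩ := hA.isClosed.isOpen_compl.exists_cylinder_prefixWord_subset hx
      exact Set.mem_iUnion.mpr ⟨n, .inr hn⟩
  have hmono : Monotone U := fun m n hmn x hx =>
    hx.imp (cylinder_prefixWord_anti x hmn).trans (cylinder_prefixWord_anti x hmn).trans
  obtain ⟨N, hN⟩ := isCompact_univ.elim_directed_cover U
    (fun n => isOpen_setOf_prefixWord n fun w => cylinder w ⊆ A ∨ cylinder w ⊆ Aᶜ)
    hcover.ge hmono.directed_le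
  refine ⟨N, (levelWords d N).filter (cylinder · ⊆ A), fun w hw => ?_, ?_⟩
  · exact mem_levelWords.mp (mem_filter.mp hw).1
  ext x
  simp only [Set.mem_ofPred_eq, mem_filter, mem_levelWords, prefixWord_length, true_and]
  refine ⟨fun hx => ?_, fun hx => hx (mem_cylinder_prefixWord x N)⟩
  exact (hN (Set.mem_univ x)).resolve_right fun h => h (mem_cylinder_prefixWord x N) hx

end Clopen

namespace IsTreeAut

variable {d : ℕ} {g : Equiv.Perm (Word d)}

theorem length_apply (hg : IsTreeAut g) (v : Word d) : (g v).length = v.length := hg.1 v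

theorem prefix_apply_iff (hg : IsTreeAut g) {v w : Word d} : g v <+: g w ↔ v <+: w :=
  (hg.2 v w).symm

theorem apply_eq_self_of_prefix (hg : IsTreeAut g) {v w : Word d} (hvw : v <+: w)
    (hw : g w = w) : g v = v :=
  List.prefix_of_prefix_length_le (hw ▸ hg.prefix_apply_iff.mpr hvw) hvw
    (hg.length_apply v).le |>.eq_of_length (hg.length_apply v)

end IsTreeAut

section RigidStabilizer

variable {d : ℕ} {G : Subgroup (Equiv.Perm (Word d))}

def rist (G : Subgroup (Equiv.Perm (Word d))) (v : Word d) : Subgroup (Equiv.Perm (Word d)) where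
  carrier := ristSet G v
  one_mem' := ⟨G.one_mem, fun _ _ => rfl⟩
  mul_mem' := fun ⟨ha, ha'⟩ ⟨hb, hb'⟩ =>
    ⟨G.mul_mem ha hb, fun w hw => by rw [Equiv.Perm.mul_apply, hb' w hw, ha' w hw]⟩
  inv_mem' := fun ⟨ha, ha'⟩ =>
    ⟨G.inv_mem ha, fun w hw => by rw [Equiv.Perm.inv_eq_iff_eq, ha' w hw]⟩

theorem rist_le (v : Word d) : rist G v ≤ G := fun _ hg => hg.1

variable {g : Equiv.Perm (Word d)} {v : Word d}

theorem IsTreeAut.apply_eq_self_of_mem_rist (hg : IsTreeAut g) (hgv : g ∈ rist G v) :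
    g v = v := by
  by_contra hne
  have hnp : ¬ v <+: g v := fun h => hne (h.eq_of_length (hg.length_apply v).symm).symm
  exact hne (g.injective (hgv.2 _ hnp))

theorem IsTreeAut.prefix_apply_iff_of_mem_rist (hg : IsTreeAut g) (hgv : g ∈ rist G v)
    {w : Word d} : v <+: g w ↔ v <+: w := by
  conv_lhs => rw [← hg.apply_eq_self_of_mem_rist hgv]
  exact hg.prefix_apply_iff

theorem IsTreeAut.mul_mul_inv_mem_rist {t : Equiv.Perm (Word d)} (ht : IsTreeAut t)
    (htG : t ∈ G) (hgv : g ∈ rist G v) : t * g * t⁻¹ ∈ rist G (t v) := by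
  refine ⟨G.mul_mem (G.mul_mem htG (rist_le v hgv)) (G.inv_mem htG), fun w hw => ?_⟩
  have : ¬ v <+: t⁻¹ w := fun h => hw (by simpa using ht.prefix_apply_iff.mpr h)
  rw [Equiv.Perm.mul_apply, Equiv.Perm.mul_apply, hgv.2 _ this]
  exact t.apply_symm_apply w

end RigidStabilizer

section Patch

open Finset

variable {d : ℕ} {G : Subgroup (Equiv.Perm (Word d))}

def levelFixedPoints (g : Equiv.Perm (Word d)) (n : ℕ) : Set (Boundary d) :=
  {x | g (prefixWord x n) = prefixWord x n}

def boundaryFixedPoints (g : Equiv.Perm (Word d)) : Set (Boundary d) :=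
  {x | ∀ n, g (prefixWord x n) = prefixWord x n}

def IsPatch (S : Finset (Word d)) (gs : Word d → Equiv.Perm (Word d))
    (P : Equiv.Perm (Word d)) : Prop :=
  ∀ q, (∀ w ∈ S, w <+: q → P q = gs w q) ∧ ((∀ w ∈ S, ¬ w <+: q) → P q = q)

variable {n : ℕ} {S : Finset (Word d)} {gs : Word d → Equiv.Perm (Word d)}

theorem exists_isPatch (hG : ∀ g ∈ G, IsTreeAut g) (hS : ∀ w ∈ S, w.length = n)
    (hgs : ∀ w ∈ S, gs w ∈ rist G w) : ∃ P ∈ G, IsPatch S gs P := by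
  induction S using Finset.induction_on with
  | empty => exact ⟨1, G.one_mem, fun q => ⟨by simp, fun _ => rfl⟩⟩
  | insert a S ha ih =>
    obtain ⟨P, hPG, hP⟩ := ih (fun w hw => hS w (mem_insert_of_mem hw))
      fun w hw => hgs w (mem_insert_of_mem hw)
    have hga := hgs a (mem_insert_self a S)
    refine ⟨gs a * P, G.mul_mem (rist_le a hga) hPG, fun q => ⟨?_, fun hq => ?_⟩⟩
    · have hlen : ∀ w ∈ S, w.length = a.length := fun w hw =>
        (hS w (mem_insert_of_mem hw)).trans (hS a (mem_insert_self a S)).symm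
      intro w hw hwq
      rcases mem_insert.mp hw with rfl | hw
      · rw [Equiv.Perm.mul_apply, (hP q).2 fun v hv hvq =>
          ha (hvq.eq_of_length_eq_of_prefix hwq (hlen v hv) ▸ hv)]
      · have hgw := hgs w (mem_insert_of_mem hw)
        have hwgq : w <+: gs w q :=
          ((hG _ (rist_le w hgw)).prefix_apply_iff_of_mem_rist hgw).mpr hwq
        rw [Equiv.Perm.mul_apply, (hP q).1 w hw hwq, hga.2 _ fun hagq =>
          ha (hwgq.eq_of_length_eq_of_prefix hagq (hlen w hw) ▸ hw)]
    · rw [Equiv.Perm.mul_apply, (hP q).2 fun w hw => hq w (mem_insert_of_mem hw),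
        hga.2 q (hq a (mem_insert_self a S))]

theorem IsPatch.mem_boundaryFixedPoints_iff {P : Equiv.Perm (Word d)} (hP : IsPatch S gs P)
    (hS : ∀ w ∈ S, w.length = n) (hgs : ∀ w ∈ S, gs w ∈ rist G w) {w : Word d}
    (hw : w ∈ S) {x : Boundary d} (hx : x ∈ cylinder w) :
    x ∈ boundaryFixedPoints P ↔ x ∈ boundaryFixedPoints (gs w) := by
  suffices h : ∀ k, P (prefixWord x k) = gs w (prefixWord x k) by
    simp only [boundaryFixedPoints, Set.mem_ofPred_eq, h]
  intro k
  rcases le_or_gt n k with hk | hk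
  · exact (hP _).1 w hw ((prefix_prefixWord_iff (hS w hw ▸ hk)).mpr hx)
  · have hshort : ∀ v ∈ S, ¬ v <+: prefixWord x k := fun v hv =>
      not_prefix_prefixWord (hS v hv ▸ hk)
    rw [(hP _).2 hshort, (hgs w hw).2 _ (hshort w hw)]

theorem IsPatch.mem_boundaryFixedPoints {P : Equiv.Perm (Word d)} (hP : IsPatch S gs P)
    (hS : ∀ w ∈ S, w.length = n) {x : Boundary d} (hx : prefixWord x n ∉ S) :
    x ∈ boundaryFixedPoints P := fun k => by
  refine (hP _).2 fun w hw hwx => hx ?_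
  rcases le_or_gt n k with hk | hk
  · rwa [← hS w hw, (prefix_prefixWord_iff (hS w hw ▸ hk)).mp hwx]
  · exact absurd hwx (not_prefix_prefixWord (hS w hw ▸ hk))

end Patch

section Counting

open Finset

theorem MulAction.exists_two_mul_card_fixed_le {H X : Type*} [Group H] [Fintype H]
    [MulAction H X] [Fintype X] [DecidableEq X] (hmove : ∀ x : X, ∃ h : H, h • x ≠ x) :
    ∃ h : H, 2 * #{x : X | h • x = x} ≤ Fintype.card X := by
  have hstab : ∀ x : X, 2 * #{h : H | h • x = x} ≤ Fintype.card H := fun x => by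
    obtain ⟨h, hh⟩ := hmove x
    have hne : stabilizer H x ≠ ⊤ := fun htop =>
      hh (htop ▸ Subgroup.mem_top h : h ∈ stabilizer H x)
    have hcard : #{h : H | h • x = x} = Nat.card (stabilizer H x) := by
      rw [Nat.card_eq_fintype_card, Fintype.card_subtype]; rfl
    rw [hcard, ← Nat.card_eq_fintype_card, ← (stabilizer H x).card_mul_index, mul_comm]
    exact Nat.mul_le_mul_left _ (Subgroup.one_lt_index_of_ne_top hne)
  have hsum : ∑ h : H, 2 * #{x : X | h • x = x} ≤ ∑ _h : H, Fintype.card X := by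
    simp only [← mul_sum, card_filter]
    rw [sum_comm, mul_sum]
    simpa [← card_filter, mul_comm] using sum_le_sum fun x (_ : x ∈ univ) => hstab x
  obtain ⟨h, -, hh⟩ := exists_le_of_sum_le univ_nonempty hsum
  exact ⟨h, hh⟩

theorem Subgroup.exists_two_mul_card_filter_fixed_le {α : Type*} [DecidableEq α]
    (K : Subgroup (Equiv.Perm α)) (X : Finset α) (hX : ∀ k ∈ K, ∀ x, k x ∈ X ↔ x ∈ X)
    (hmove : ∀ x ∈ X, ∃ k ∈ K, k x ≠ x) :
    ∃ k ∈ K, 2 * #{x ∈ X | k x = x} ≤ #X := by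
  let ρ : K →* Equiv.Perm X :=
    { toFun := fun k => k.1.subtypePerm (hX k k.2 ·)
      map_one' := rfl
      map_mul' := fun _ _ => rfl }
  have := Fintype.ofFinite ρ.range
  obtain ⟨⟨_, k, rfl⟩, hk⟩ :=
    MulAction.exists_two_mul_card_fixed_le (H := ρ.range) (X := X) fun x => by
      obtain ⟨k, hkK, hkx⟩ := hmove x x.2
      exact ⟨⟨ρ ⟨k, hkK⟩, MonoidHom.mem_range.mpr ⟨_, rfl⟩⟩,
        fun h => hkx (congrArg Subtype.val h)⟩
  refine ⟨k, k.2, ?_⟩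
  convert hk using 2
  · rw [← card_attach (s := X.filter _),
      ← card_map ((Function.Embedding.refl _).subtypeMap mem_of_mem_filter), ← filter_attach,
      ← univ_eq_attach]
    exact congrArg card (filter_congr fun x _ => ⟨fun h => Subtype.ext h, congrArg Subtype.val⟩)
  · simp

end Counting

section HalfFixed

open Finset

variable {d : ℕ} {G : Subgroup (Equiv.Perm (Word d))}

theorem exists_mem_rist_two_mul_card_fixed_le (hG : ∀ g ∈ G, IsTreeAut g)
    (hWB : IsWeaklyBranch G) (u : Word d) :
    ∃ m ≥ u.length, ∃ h ∈ rist G u,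
      2 * #{w ∈ extensions u m | h w = w} ≤ #(extensions u m) := by
  obtain ⟨g, hgu, hg1⟩ := hWB.2 u
  obtain ⟨w₀, hw₀⟩ : ∃ w, g w ≠ w := by
    by_contra! h
    exact hg1 (Equiv.ext h)
  have huw₀ : u <+: w₀ := by
    by_contra h
    exact hw₀ (hgu.2 _ h)
  refine ⟨w₀.length, huw₀.length_le, (rist G u).exists_two_mul_card_filter_fixed_le _ ?_ ?_⟩
  · intro k hk w
    have hkT := hG k (rist_le u hk)
    simp [hkT.length_apply, hkT.prefix_apply_iff_of_mem_rist hk]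
  · intro w hw
    obtain ⟨hwlen, huw⟩ := mem_extensions.mp hw
    -- conjugate `g` by an element of `G` carrying `w₀` to `w`
    obtain ⟨t, htG, rfl⟩ := hWB.1 w₀ w hwlen.symm
    have htT := hG t htG
    have htu : t u = u :=
      (htT.prefix_apply_iff.mpr huw₀).eq_of_length_eq_of_prefix huw (htT.length_apply u)
    refine ⟨t * g * t⁻¹, htu ▸ htT.mul_mul_inv_mem_rist htG hgu, ?_⟩
    simpa using fun h => hw₀ (t.injective h)

variable {μ : Measure (Boundary d)}

theorem exists_mem_rist_two_mul_measure_fixed_le (hG : ∀ g ∈ G, IsTreeAut g)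
    (hWB : IsWeaklyBranch G) (hμ : IsUniformBernoulli μ) (u : Word d) :
    ∃ m ≥ u.length, ∃ h ∈ rist G u,
      2 * μ (cylinder u ∩ levelFixedPoints h m) ≤ μ (cylinder u) := by
  obtain ⟨m, hm, h, hh, hcard⟩ := exists_mem_rist_two_mul_card_fixed_le hG hWB u
  refine ⟨m, hm, h, hh, ?_⟩
  have hlen : ∀ w ∈ extensions u m, w.length = m := fun w hw => (mem_extensions.mp hw).1
  have hfix : cylinder u ∩ levelFixedPoints h m =
      {x | prefixWord x m ∈ {w ∈ extensions u m | h w = w}} := by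
    rw [← setOf_prefixWord_mem_extensions hm]
    ext x
    simp [levelFixedPoints]
  rw [hfix, ← setOf_prefixWord_mem_extensions hm,
    measure_setOf_prefixWord_mem hμ fun w hw => hlen w (mem_filter.mp hw).1,
    measure_setOf_prefixWord_mem hμ hlen, ← mul_assoc]
  gcongr
  exact_mod_cast hcard

end HalfFixed

section FixedMeasure

open Finset

variable {d : ℕ} {G : Subgroup (Equiv.Perm (Word d))} {μ : Measure (Boundary d)}

theorem measurableSet_levelFixedPoints (g : Equiv.Perm (Word d)) (n : ℕ) :
    MeasurableSet (levelFixedPoints g n) :=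
  measurableSet_setOf_prefixWord n fun w => g w = w

theorem measurableSet_boundaryFixedPoints (g : Equiv.Perm (Word d)) :
    MeasurableSet (boundaryFixedPoints g) := by
  have : boundaryFixedPoints g = ⋂ n, levelFixedPoints g n := by
    ext x
    simp [boundaryFixedPoints, levelFixedPoints]
  rw [this]
  exact .iInter (measurableSet_levelFixedPoints g)

theorem IsTreeAut.exists_measure_levelFixedPoints_diff_lt {h : Equiv.Perm (Word d)}
    (hh : IsTreeAut h) (μ : Measure (Boundary d)) [IsFiniteMeasure μ] (m : ℕ) {δ : ℝ≥0∞}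
    (hδ : 0 < δ) :
    ∃ M ≥ m, μ (levelFixedPoints h M \ boundaryFixedPoints h) < δ := by
  set D := fun n => levelFixedPoints h n \ boundaryFixedPoints h
  have hanti : Antitone D := antitone_nat_of_succ_le fun n x ⟨hx, hfix⟩ =>
    ⟨hh.apply_eq_self_of_prefix (prefixWord_prefix_prefixWord x n.le_succ) hx, hfix⟩
  have hempty : ⋂ n, D n = ∅ := Set.eq_empty_of_forall_notMem fun x hx =>
    (Set.mem_iInter.mp hx 0).2 fun n => (Set.mem_iInter.mp hx n).1
  have htend := tendsto_measure_iInter_atTop (μ := μ)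
    (fun n => ((measurableSet_levelFixedPoints h n).diff
      (measurableSet_boundaryFixedPoints h)).nullMeasurableSet) hanti ⟨0, measure_ne_top μ _⟩
  rw [hempty, measure_empty] at htend
  obtain ⟨N, hN⟩ := Filter.eventually_atTop.mp (htend.eventually (gt_mem_nhds hδ))
  exact ⟨max N m, le_max_right N m, hN _ (le_max_left N m)⟩

theorem boundaryFixedPoints_mul_inter_cylinder_subset {u : Word d} {M : ℕ} (hM : u.length ≤ M)
    {h P : Equiv.Perm (Word d)} {gs : Word d → Equiv.Perm (Word d)}
    (hgs : ∀ w ∈ {w ∈ extensions u M | h w = w}, gs w ∈ rist G w)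
    (hP : IsPatch {w ∈ extensions u M | h w = w} gs P) :
    boundaryFixedPoints (h * P) ∩ cylinder u ⊆
      (⋃ w ∈ {w ∈ extensions u M | h w = w}, boundaryFixedPoints (gs w) ∩ cylinder w) ∪
        (levelFixedPoints h M \ boundaryFixedPoints h) := by
  rintro x ⟨hx, hxu⟩
  have hS : ∀ w ∈ {w ∈ extensions u M | h w = w}, w.length = M := fun w hw =>
    (mem_extensions.mp (mem_filter.mp hw).1).1
  by_cases hw : prefixWord x M ∈ {w ∈ extensions u M | h w = w}
  · have hxw := mem_cylinder_prefixWord x M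
    by_cases hxg : x ∈ boundaryFixedPoints (gs (prefixWord x M))
    · exact Set.mem_union_left _ (Set.mem_biUnion hw ⟨hxg, hxw⟩)
    · refine Set.mem_union_right _ ⟨(mem_filter.mp hw).2, fun hxh => hxg ?_⟩
      refine (hP.mem_boundaryFixedPoints_iff hS hgs hw hxw).mp fun n => h.injective ?_
      exact (hx n).trans (hxh n).symm
  · -- `P` fixes the vertex `prefixWord x M`, hence so does `h`
    refine absurd (mem_filter.mpr ⟨mem_extensions.mpr ⟨prefixWord_length x M,
      (prefix_prefixWord_iff hM).mpr hxu⟩, ?_⟩) hw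
    simpa [hP.mem_boundaryFixedPoints hS hw M] using hx M

end FixedMeasure

section Improvement

open Finset

variable {d : ℕ} {G : Subgroup (Equiv.Perm (Word d))} {μ : Measure (Boundary d)}

noncomputable def infFixedMeasure (G : Subgroup (Equiv.Perm (Word d))) (μ : Measure (Boundary d))
    (u : Word d) : ℝ≥0∞ :=
  ⨅ g ∈ rist G u, μ (boundaryFixedPoints g ∩ cylinder u)

theorem measure_cylinder_ne_zero (hμ : IsUniformBernoulli μ) (u : Word d) :
    μ (cylinder u) ≠ 0 := by
  simp [hμ u]

theorem exists_mem_rist_measure_lt_of_infFixedMeasure_lt {u : Word d} {a : ℝ≥0∞}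
    (h : infFixedMeasure G μ u < a) :
    ∃ g ∈ rist G u, μ (boundaryFixedPoints g ∩ cylinder u) < a := by
  simpa [infFixedMeasure, iInf_lt_iff] using h

theorem infFixedMeasure_le_measure_cylinder {u : Word d} :
    infFixedMeasure G μ u ≤ μ (cylinder u) :=
  (iInf₂_le 1 (rist G u).one_mem).trans (measure_mono Set.inter_subset_right)

theorem infFixedMeasure_le_half [IsProbabilityMeasure μ] (hG : ∀ g ∈ G, IsTreeAut g)
    (hWB : IsWeaklyBranch G) (hμ : IsUniformBernoulli μ) {c : ℝ≥0∞}
    (hc : ∀ w, infFixedMeasure G μ w ≤ c * μ (cylinder w)) (u : Word d) :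
    infFixedMeasure G μ u ≤ c / 2 * μ (cylinder u) := by
  obtain ⟨m, hm, h, hh, hhalf⟩ := exists_mem_rist_two_mul_measure_fixed_le hG hWB hμ u
  refine ENNReal.le_of_forall_pos_le_add fun η hη hfin => ?_
  have hη' : (0 : ℝ≥0∞) < η := by exact_mod_cast hη
  have hc_top : c ≠ ⊤ := by
    rintro rfl
    simp [ENNReal.top_div, measure_cylinder_ne_zero hμ u] at hfin
  obtain ⟨M, hMm, hM⟩ := (hG h (rist_le u hh)).exists_measure_levelFixedPoints_diff_lt μ m
    (ENNReal.half_pos hη'.ne')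
  set S := {w ∈ extensions u M | h w = w}
  have hS : ∀ w ∈ S, w.length = M := fun w hw => (mem_extensions.mp (mem_filter.mp hw).1).1
  have hsel : ∀ w, ∃ g ∈ rist G w,
      μ (boundaryFixedPoints g ∩ cylinder w) < (c + η) * μ (cylinder w) := fun w =>
    exists_mem_rist_measure_lt_of_infFixedMeasure_lt <| (hc w).trans_lt <| by
      rw [add_mul]
      exact ENNReal.lt_add_right (ENNReal.mul_ne_top hc_top (measure_ne_top μ _))
        (mul_ne_zero hη'.ne' (measure_cylinder_ne_zero hμ w))
  choose gs hgs hgs_lt using hsel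
  obtain ⟨P, hPG, hP⟩ := exists_isPatch hG hS fun w _ => hgs w
  have hPu : P ∈ rist G u := ⟨hPG, fun q hq => (hP q).2 fun w hw hwq =>
    hq ((mem_extensions.mp (mem_filter.mp hw).1).2.trans hwq)⟩
  have hcyl : ∑ w ∈ S, μ (cylinder w) ≤ μ (cylinder u ∩ levelFixedPoints h m) := by
    rw [← measure_setOf_prefixWord_mem_eq_sum μ hS]
    refine measure_mono fun x hx => ⟨?_, ?_⟩
    · exact (prefix_prefixWord_iff (hm.trans hMm)).mp (mem_extensions.mp (mem_filter.mp hx).1).2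
    · exact (hG h (rist_le u hh)).apply_eq_self_of_prefix (prefixWord_prefix_prefixWord x hMm)
        (mem_filter.mp hx).2
  have hhalf' : μ (cylinder u ∩ levelFixedPoints h m) ≤ μ (cylinder u) / 2 := by
    rw [ENNReal.le_div_iff_mul_le (by simp) (by simp), mul_comm]
    exact hhalf
  calc infFixedMeasure G μ u ≤ μ (boundaryFixedPoints (h * P) ∩ cylinder u) :=
        iInf₂_le _ (mul_mem hh hPu)
    _ ≤ μ ((⋃ w ∈ S, boundaryFixedPoints (gs w) ∩ cylinder w) ∪
          (levelFixedPoints h M \ boundaryFixedPoints h)) :=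
        measure_mono (boundaryFixedPoints_mul_inter_cylinder_subset (hm.trans hMm)
          (fun w _ => hgs w) hP)
    _ ≤ ∑ w ∈ S, μ (boundaryFixedPoints (gs w) ∩ cylinder w) + η / 2 :=
        (measure_union_le _ _).trans (add_le_add (measure_biUnion_finset_le _ _) hM.le)
    _ ≤ ∑ w ∈ S, (c + η) * μ (cylinder w) + η / 2 := by
        gcongr with w
        exact (hgs_lt w).le
    _ ≤ (c + η) * (μ (cylinder u) / 2) + η / 2 := by
        rw [← mul_sum]
        gcongr
        exact hcyl.trans hhalf'
    _ = c / 2 * μ (cylinder u) + η * (μ (cylinder u) / 2) + η / 2 := by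
        simp only [div_eq_mul_inv]
        ring
    _ ≤ c / 2 * μ (cylinder u) + η * (1 / 2) + η / 2 := by
        gcongr
        exact prob_le_one
    _ = c / 2 * μ (cylinder u) + η := by
        rw [add_assoc, mul_one_div, ENNReal.add_halves]

end Improvement

theorem exists_mem_rist_measure_lt {d : ℕ} {G : Subgroup (Equiv.Perm (Word d))}
    {μ : Measure (Boundary d)} [IsProbabilityMeasure μ] (hG : ∀ g ∈ G, IsTreeAut g)
    (hWB : IsWeaklyBranch G) (hμ : IsUniformBernoulli μ) (u : Word d) {c : ℝ≥0∞}
    (hc : 0 < c) :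
    ∃ g ∈ rist G u, μ (boundaryFixedPoints g ∩ cylinder u) < c * μ (cylinder u) := by
  have hpow : ∀ k : ℕ, ∀ w, infFixedMeasure G μ w ≤ 2⁻¹ ^ k * μ (cylinder w) := by
    intro k
    induction k with
    | zero => simpa using fun w => infFixedMeasure_le_measure_cylinder (u := w)
    | succ k ih => simpa [pow_succ, div_eq_mul_inv] using infFixedMeasure_le_half hG hWB hμ ih
  obtain ⟨k, hk⟩ := ENNReal.exists_inv_two_pow_lt hc.ne'
  refine exists_mem_rist_measure_lt_of_infFixedMeasure_lt <| (hpow k u).trans_lt ?_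
  exact ENNReal.mul_lt_mul_left (measure_cylinder_ne_zero hμ u) (measure_ne_top μ _) hk

section AbsolutelyNonFree

open Finset

variable {d : ℕ} {G : Subgroup (Equiv.Perm (Word d))}
  {act : Equiv.Perm (Word d) → Boundary d → Boundary d} {μ : Measure (Boundary d)}

theorem exists_isClopen_measure_symmDiff_lt (μ : Measure (Boundary d)) [IsFiniteMeasure μ]
    {B : Set (Boundary d)} (hB : MeasurableSet B) {ε : ℝ≥0∞} (hε : 0 < ε) :
    ∃ A, IsClopen A ∧ μ (A ∆ B) < ε := by
  have hgen : (MeasurableSpace.pi : MeasurableSpace (Boundary d)) =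
      MeasurableSpace.generateFrom {s | IsClopen s} := by
    refine le_antisymm ?_ (MeasurableSpace.generateFrom_le fun s hs => ?_)
    · rw [MeasurableSpace.pi_eq_generateFrom_projections]
      refine MeasurableSpace.generateFrom_mono ?_
      rintro _ ⟨i, s, -, rfl⟩
      exact (isClopen_discrete s).preimage (continuous_apply i)
    · obtain ⟨N, S, -, rfl⟩ := IsClopen.exists_eq_setOf_prefixWord_mem hs
      exact measurableSet_setOf_prefixWord N (· ∈ S)
  exact exists_measure_symmDiff_lt_of_generateFrom_isSetRing
    ⟨isClopen_empty, fun _ _ => .union, fun _ _ => .diff⟩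
    ⟨{Set.univ}, Set.countable_singleton _, by simp [isClopen_univ], by simp⟩ hgen hB hε

theorem IsBoundaryAction.fixedSet_eq (hact : IsBoundaryAction G act) {g : Equiv.Perm (Word d)}
    (hg : g ∈ G) : fixedSet act g = boundaryFixedPoints g := by
  ext x
  refine ⟨fun h n => ?_, fun h => eq_of_forall_prefixWord_eq fun n => ?_⟩
  · rw [← hact g hg x n, show act g x = x from h]
  · exact (hact g hg x n).trans (h n)

theorem exists_suppSet_subset_measure_diff_lt [IsProbabilityMeasure μ]
    (hG : ∀ g ∈ G, IsTreeAut g) (hWB : IsWeaklyBranch G) (hact : IsBoundaryAction G act)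
    (hμ : IsUniformBernoulli μ) {A : Set (Boundary d)} (hA : IsClopen A) {ε : ℝ≥0∞}
    (hε : 0 < ε) : ∃ g ∈ G, suppSet act g ⊆ A ∧ μ (A \ suppSet act g) < ε := by
  obtain ⟨N, S, hS, rfl⟩ := hA.exists_eq_setOf_prefixWord_mem
  obtain ⟨c, hc0, hcε⟩ := exists_between hε
  choose gs hgs hgs_lt using fun w => exists_mem_rist_measure_lt hG hWB hμ w hc0
  obtain ⟨P, hPG, hP⟩ := exists_isPatch hG hS fun w _ => hgs w
  have hfix : fixedSet act P = boundaryFixedPoints P := hact.fixedSet_eq hPG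
  refine ⟨P, hPG, fun x hx => by_contra fun hxS => hx ?_, ?_⟩
  · change x ∈ fixedSet act P
    exact hfix ▸ hP.mem_boundaryFixedPoints hS hxS
  have hsub : {x | prefixWord x N ∈ S} \ suppSet act P ⊆
      ⋃ w ∈ S, boundaryFixedPoints (gs w) ∩ cylinder w := by
    rintro x ⟨hxS, hxP⟩
    have hxP' : x ∈ boundaryFixedPoints P := hfix ▸ not_not.mp hxP
    exact Set.mem_biUnion hxS ⟨(hP.mem_boundaryFixedPoints_iff hS (fun w _ => hgs w) hxS
      (mem_cylinder_prefixWord x N)).mp hxP', mem_cylinder_prefixWord x N⟩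
  calc μ ({x | prefixWord x N ∈ S} \ suppSet act P)
      ≤ ∑ w ∈ S, μ (boundaryFixedPoints (gs w) ∩ cylinder w) :=
        (measure_mono hsub).trans (measure_biUnion_finset_le _ _)
    _ ≤ ∑ w ∈ S, c * μ (cylinder w) := sum_le_sum fun w _ => (hgs_lt w).le
    _ = c * μ {x | prefixWord x N ∈ S} := by
        rw [← mul_sum, measure_setOf_prefixWord_mem_eq_sum μ hS]
    _ ≤ c := mul_le_of_le_one_right' prob_le_one
    _ < ε := hcε

theorem exists_measure_fixedSet_symmDiff_lt [IsFiniteMeasure μ]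
    (hclopen : ∀ A : Set (Boundary d), IsClopen A → ∀ ε : ℝ≥0∞, 0 < ε →
      ∃ g ∈ G, suppSet act g ⊆ A ∧ μ (A \ suppSet act g) < ε)
    {B : Set (Boundary d)} (hB : MeasurableSet B) {ε : ℝ≥0∞} (hε : 0 < ε) :
    ∃ g ∈ G, μ (fixedSet act g ∆ B) < ε := by
  have hε2 : 0 < ε / 2 := ENNReal.half_pos hε.ne'
  obtain ⟨A, hA, hAB⟩ := exists_isClopen_measure_symmDiff_lt μ hB.compl hε2
  obtain ⟨g, hg, hgA, hAg⟩ := hclopen A hA (ε / 2) hε2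
  refine ⟨g, hg, ?_⟩
  calc μ (fixedSet act g ∆ B) = μ (suppSet act g ∆ Bᶜ) := by
        rw [← compl_symmDiff_compl]; rfl
    _ ≤ μ (suppSet act g ∆ A) + μ (A ∆ Bᶜ) := measure_symmDiff_le _ _ _
    _ < ε / 2 + ε / 2 := by
        rw [symmDiff_of_le hgA]
        exact ENNReal.add_lt_add hAg hAB
    _ = ε := ENNReal.add_halves ε

end AbsolutelyNonFree

theorem weaklyBranch_absolutelyNonFree_general
    {d : ℕ} (G : Subgroup (Equiv.Perm (Word d)))
    (hG : ∀ g ∈ G, IsTreeAut g) (hWB : IsWeaklyBranch G)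
    (act : Equiv.Perm (Word d) → Boundary d → Boundary d) (hact : IsBoundaryAction G act)
    (μ : Measure (Boundary d)) [IsProbabilityMeasure μ] (hμ : IsUniformBernoulli μ) :
    (∀ A : Set (Boundary d), IsClopen A → ∀ ε : ℝ≥0∞, 0 < ε →
      ∃ g ∈ G, suppSet act g ⊆ A ∧ μ (A \ suppSet act g) < ε) ∧
    (∀ B : Set (Boundary d), MeasurableSet B → ∀ ε : ℝ≥0∞, 0 < ε →
      ∃ g ∈ G, μ (fixedSet act g ∆ B) < ε) := by
  have hclopen : ∀ A : Set (Boundary d), IsClopen A → ∀ ε : ℝ≥0∞, 0 < ε →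
      ∃ g ∈ G, suppSet act g ⊆ A ∧ μ (A \ suppSet act g) < ε := fun _ hA _ hε =>
    exists_suppSet_subset_measure_diff_lt hG hWB hact hμ hA hε
  exact ⟨hclopen, fun _ hB _ hε => exists_measure_fixedSet_symmDiff_lt hclopen hB hε⟩

/-- For a weakly branch group `G` on the `d`-regular rooted tree: every clopen subset `A` of the
boundary can be almost filled by the support of some `g ∈ G` contained in `A`; consequently the
boundary action is absolutely non-free: every measurable set is approximated in measure by
fixed-point sets of elements of `G`. -/
theorem weaklyBranch_absolutelyNonFree
    {d : ℕ} (hd : 2 ≤ d) (G : Subgroup (Equiv.Perm (Word d)))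
    (hG : ∀ g ∈ G, IsTreeAut g) (hWB : IsWeaklyBranch G)
    (act : Equiv.Perm (Word d) → Boundary d → Boundary d) (hact : IsBoundaryAction G act)
    (μ : Measure (Boundary d)) [IsProbabilityMeasure μ] (hμ : IsUniformBernoulli μ) :
    (∀ A : Set (Boundary d), IsClopen A → ∀ ε : ℝ≥0∞, 0 < ε →
      ∃ g ∈ G, suppSet act g ⊆ A ∧ μ (A \ suppSet act g) < ε) ∧
    (∀ B : Set (Boundary d), MeasurableSet B → ∀ ε : ℝ≥0∞, 0 < ε →
      ∃ g ∈ G, μ (fixedSet act g ∆ B) < ε) :=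
  weaklyBranch_absolutelyNonFree_general G hG hWB act hact μ hμ
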